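/- arXiv:1510.05790 — 4 statements merged into one kernel-verified Lean document; each statement's English description precedes it below -/
import Mathlib

section
/- If ŵ = Σ^{-1} e has nonzero coordinate sum, then w* = ŵ / (Σ_i ŵ_i) maximizes the Sharpe ratio S(w) = w^T e / sqrt(w^T Σ w) over all w ∈ ℝ^n with Σ_i w_i = 1, provided Σ_i ŵ_i > 0. -/
/-!
Since `Σ ŵ = e`, the expected return `wᵀe` is the `Σ`-inner product of `w` with `ŵ`, so
Cauchy–Schwarz for this (semi-)inner product bounds `S(w)` by `√(ŵᵀΣŵ) = S(ŵ)`. The Sharpe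
ratio is invariant under positive scaling, and `∑ ŵᵢ > 0`, so `w*` attains the same value.
-/

open Matrix

namespace Matrix.PosSemidef

variable {ι : Type*} [Fintype ι] {A : Matrix ι ι ℝ}

theorem dotProduct_mulVec_le_sqrt_mul_sqrt (hA : A.PosSemidef) (x y : ι → ℝ) :
    x ⬝ᵥ A *ᵥ y ≤ √(x ⬝ᵥ A *ᵥ x) * √(y ⬝ᵥ A *ᵥ y) := by
  let := A.toSeminormedAddCommGroup hA
  let := A.toInnerProductSpace hA
  have h := real_inner_le_norm x y
  rw [norm_eq_sqrt_real_inner, norm_eq_sqrt_real_inner] at h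
  -- Mathlib's `A`-inner product is `⟪x, y⟫ = (A *ᵥ y) ⬝ᵥ star x`.
  change (A *ᵥ y) ⬝ᵥ star x ≤ √((A *ᵥ x) ⬝ᵥ star x) * √((A *ᵥ y) ⬝ᵥ star y) at h
  simpa only [star_trivial, dotProduct_comm _ x, dotProduct_comm _ y] using h

end Matrix.PosSemidef

section SharpeRatio

variable {ι : Type*} [Fintype ι]

-- A zero-variance portfolio gets ratio `0`, since `x / 0 = 0`.
noncomputable def sharpeRatio (S : Matrix ι ι ℝ) (e w : ι → ℝ) : ℝ :=
  (w ⬝ᵥ e) / √(w ⬝ᵥ S *ᵥ w)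

theorem sharpeRatio_smul_of_pos (S : Matrix ι ι ℝ) (e w : ι → ℝ) {c : ℝ} (hc : 0 < c) :
    sharpeRatio S e (c • w) = sharpeRatio S e w := by
  have hvar : (c • w) ⬝ᵥ S *ᵥ (c • w) = (c * c) * (w ⬝ᵥ S *ᵥ w) := by
    simp only [mulVec_smul, smul_dotProduct, dotProduct_smul, smul_eq_mul, mul_assoc]
  rw [sharpeRatio, sharpeRatio, hvar, smul_dotProduct, smul_eq_mul,
    Real.sqrt_mul (mul_self_nonneg c), Real.sqrt_mul_self hc.le, mul_div_mul_left _ _ hc.ne']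

theorem sharpeRatio_of_mulVec_eq {S : Matrix ι ι ℝ} {e v : ι → ℝ} (h : S *ᵥ v = e) :
    sharpeRatio S e v = √(v ⬝ᵥ S *ᵥ v) := by
  rw [sharpeRatio, ← h, Real.div_sqrt]

theorem sharpeRatio_le_of_mulVec_eq {S : Matrix ι ι ℝ} (hS : S.PosSemidef) {e v : ι → ℝ}
    (h : S *ᵥ v = e) (w : ι → ℝ) : sharpeRatio S e w ≤ sharpeRatio S e v := by
  rw [sharpeRatio_of_mulVec_eq h, sharpeRatio, ← h]
  refine div_le_of_le_mul₀ (Real.sqrt_nonneg _) (Real.sqrt_nonneg _) ?_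
  rw [mul_comm]
  exact hS.dotProduct_mulVec_le_sqrt_mul_sqrt w v

end SharpeRatio

/-- If `ŵ = Σ⁻¹ e` has positive coordinate sum, then `w* = ŵ / ∑ ŵᵢ` maximizes
the Sharpe ratio over all weight vectors summing to one. -/
theorem normalized_solution_maximizes_sharpe (n : ℕ)
    (Sig : Matrix (Fin n) (Fin n) ℝ) (hSig : Sig.PosDef)
    (e : Fin n → ℝ)
    (what : Fin n → ℝ) (hwhat : what = Sig⁻¹.mulVec e)
    (hsum : 0 < ∑ i, what i) :
    ∀ w : Fin n → ℝ, ∑ i, w i = 1 →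
      (w ⬝ᵥ e) / Real.sqrt (w ⬝ᵥ Sig.mulVec w) ≤
        (((∑ i, what i)⁻¹ • what) ⬝ᵥ e) /
          Real.sqrt (((∑ i, what i)⁻¹ • what) ⬝ᵥ Sig.mulVec ((∑ i, what i)⁻¹ • what)) := by
  intro w _
  have hmulVec : Sig *ᵥ what = e := by
    rw [hwhat, mulVec_mulVec, mul_nonsing_inv _ (isUnit_iff_isUnit_det _ |>.mp hSig.isUnit),
      one_mulVec]
  calc sharpeRatio Sig e w ≤ sharpeRatio Sig e what :=
        sharpeRatio_le_of_mulVec_eq hSig.posSemidef hmulVec w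
    _ = sharpeRatio Sig e ((∑ i, what i)⁻¹ • what) :=
        (sharpeRatio_smul_of_pos Sig e what (inv_pos.mpr hsum)).symm
end

section
/- For an integrable real random variable R with E[(L - R)^+] > 0, the Omega measure Ω(R) = ∫_L^∞ (1 - F(x)) dx / ∫_{-∞}^L F(x) dx satisfies Ω(R) = E[(R - L)^+] / E[(L - R)^+] = (E[R] - L)/E[(L - R)^+] + 1. -/
open MeasureTheory

lemma shift_Ioi (g : ℝ → ℝ) (L : ℝ) :
    ∫ t in Set.Ioi (0:ℝ), g (t + L) = ∫ x in Set.Ioi L, g x := by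
  have A : MeasurableEmbedding fun x : ℝ => x + L :=
    (Homeomorph.addRight L).isClosedEmbedding.measurableEmbedding
  have h := A.setIntegral_map (μ := volume) g (Set.Ioi L)
  rw [Measure.IsAddRightInvariant.map_add_right_eq_self (μ := (volume : Measure ℝ)) L] at h
  have hpre : (fun x : ℝ => x + L) ⁻¹' Set.Ioi L = Set.Ioi 0 := by ext x; simp
  rw [hpre] at h
  exact h.symm

lemma shift_Iic (g : ℝ → ℝ) (L : ℝ) :
    ∫ t in Set.Iic (0:ℝ), g (t + L) = ∫ x in Set.Iic L, g x := by
  have A : MeasurableEmbedding fun x : ℝ => x + L :=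
    (Homeomorph.addRight L).isClosedEmbedding.measurableEmbedding
  have h := A.setIntegral_map (μ := volume) g (Set.Iic L)
  rw [Measure.IsAddRightInvariant.map_add_right_eq_self (μ := (volume : Measure ℝ)) L] at h
  have hpre : (fun x : ℝ => x + L) ⁻¹' Set.Iic L = Set.Iic 0 := by ext x; simp
  rw [hpre] at h
  exact h.symm

lemma refl_Iio (g : ℝ → ℝ) (L : ℝ) :
    ∫ t in Set.Ioi (0:ℝ), g (L - t) = ∫ x in Set.Iio L, g x := by
  have h0 := integral_comp_neg_Ioi (0:ℝ) (fun x => g (x + L))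
  simp only [neg_zero] at h0
  have h1 : ∫ t in Set.Ioi (0:ℝ), g (L - t)
      = ∫ t in Set.Ioi (0:ℝ), g (-t + L) := by
    congr 1; ext t; ring_nf
  rw [h1, h0, shift_Iic g L]
  have : (volume : Measure ℝ).restrict (Set.Iic L)
      = (volume : Measure ℝ).restrict (Set.Iio L) := by
    refine (Measure.restrict_congr_set ?_).symm
    exact MeasureTheory.Iio_ae_eq_Iic
  rw [this]

/-- The Omega measure `Ω(R) = ∫_L^∞(1-F) / ∫_{-∞}^L F` equals
`E[(R-L)⁺]/E[(L-R)⁺] = (E[R]-L)/E[(L-R)⁺] + 1`. -/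
theorem omega_measure_formula {Ω : Type*} [MeasureSpace Ω]
    [IsProbabilityMeasure (volume : Measure Ω)]
    (R : Ω → ℝ) (hR : Integrable R) (L : ℝ)
    (F : ℝ → ℝ) (hF : ∀ x, F x = ((volume : Measure Ω) {ω | R ω ≤ x}).toReal)
    (hnum : IntegrableOn (fun x => 1 - F x) (Set.Ioi L))
    (hden : IntegrableOn F (Set.Iio L))
    (hpos : 0 < ∫ ω, max (L - R ω) 0) :
    (∫ x in Set.Ioi L, (1 - F x)) / (∫ x in Set.Iio L, F x) =
        (∫ ω, max (R ω - L) 0) / (∫ ω, max (L - R ω) 0) ∧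
      (∫ ω, max (R ω - L) 0) / (∫ ω, max (L - R ω) 0) =
        ((∫ ω, R ω) - L) / (∫ ω, max (L - R ω) 0) + 1 := by
  set μ := (volume : Measure Ω)
  have hns : ∀ x : ℝ, NullMeasurableSet {ω | R ω ≤ x} μ := by
    intro x
    exact hR.aemeasurable.nullMeasurable measurableSet_Iic
  -- integrability of the pos parts
  have i1 : Integrable (fun ω => max (R ω - L) 0) μ :=
    (hR.sub (integrable_const L)).pos_part
  have i2 : Integrable (fun ω => max (L - R ω) 0) μ :=
    ((integrable_const L).sub hR).pos_part
  -- numerator : E[(R-L)⁺] = ∫_{Ioi L} (1 - F)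
  have hnum' : ∫ ω, max (R ω - L) 0 ∂μ = ∫ x in Set.Ioi L, (1 - F x) := by
    rw [i1.integral_eq_integral_meas_lt
      (Filter.Eventually.of_forall fun ω => le_max_right _ _)]
    have step1 : ∀ t ∈ Set.Ioi (0:ℝ),
        μ.real {a | t < max (R a - L) 0} = (fun x => 1 - F x) (t + L) := by
      intro t ht
      rw [measureReal_def]
      have hset : {a | t < max (R a - L) 0} = {a | R a ≤ t + L}ᶜ := by
        ext a
        simp only [Set.mem_setOf_eq, Set.mem_compl_iff, not_le, lt_max_iff]
        constructor
        · rintro (h | h)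
          · linarith
          · exact absurd ht.out (not_lt.mpr h.le)
        · intro h; left; linarith
      rw [hset, measure_compl₀ (hns (t + L)) (measure_ne_top _ _), measure_univ,
        ENNReal.toReal_sub_of_le prob_le_one ENNReal.one_ne_top, ENNReal.toReal_one]
      simp [hF]
    rw [setIntegral_congr_fun measurableSet_Ioi step1, shift_Ioi (fun x => 1 - F x) L]
  -- denominator : E[(L-R)⁺] = ∫_{Iio L} F
  have hden' : ∫ ω, max (L - R ω) 0 ∂μ = ∫ x in Set.Iio L, F x := by
    rw [i2.integral_eq_integral_meas_le
      (Filter.Eventually.of_forall fun ω => le_max_right _ _)]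
    have step1 : ∀ t ∈ Set.Ioi (0:ℝ),
        μ.real {a | t ≤ max (L - R a) 0} = F (L - t) := by
      intro t ht
      rw [measureReal_def]
      have hset : {a | t ≤ max (L - R a) 0} = {a | R a ≤ L - t} := by
        ext a
        simp only [Set.mem_setOf_eq, le_max_iff]
        constructor
        · rintro (h | h)
          · linarith
          · exact absurd ht.out (not_lt.mpr h)
        · intro h; left; linarith
      rw [hset, hF (L - t)]
    rw [setIntegral_congr_fun measurableSet_Ioi step1, refl_Iio F L]
  have hCne : (∫ ω, max (L - R ω) 0 ∂μ) ≠ 0 := ne_of_gt hpos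
  constructor
  · rw [hnum', hden']
  · -- E[(R-L)⁺] = E[R] - L + E[(L-R)⁺]
    have key : (∫ ω, max (R ω - L) 0 ∂μ)
        = ((∫ ω, R ω ∂μ) - L) + ∫ ω, max (L - R ω) 0 ∂μ := by
      have hptwise : ∀ ω, max (R ω - L) 0 = (R ω - L) + max (L - R ω) 0 := by
        intro ω
        rcases le_total (R ω) L with h | h
        · rw [max_eq_right (by linarith), max_eq_left (by linarith)]; ring
        · rw [max_eq_left (by linarith), max_eq_right (by linarith)]; ring
      calc (∫ ω, max (R ω - L) 0 ∂μ)
          = ∫ ω, ((R ω - L) + max (L - R ω) 0) ∂μ := by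
            exact integral_congr_ae (Filter.Eventually.of_forall hptwise)
        _ = (∫ ω, (R ω - L) ∂μ) + ∫ ω, max (L - R ω) 0 ∂μ :=
            integral_add (hR.sub (integrable_const L)) i2
        _ = ((∫ ω, R ω ∂μ) - L) + ∫ ω, max (L - R ω) 0 ∂μ := by
            rw [integral_sub hR (integrable_const L), integral_const, probReal_univ,
              one_smul]
    rw [key, add_div, div_self hCne]
end

section
/- Let Σ be symmetric positive definite with Cholesky factorization Σ = L L^T (L lower triangular with positive diagonal). Suppose P ∪ {k} indexes coordinates, w solves Σ_{P∪{k}} w = (e_P; e_k + μ̂_k) with w_k = 0, and x solves Σ_{P∪{k}} x = (e_P; e_k). If k is the last index in the ordering, then x_k = -μ̂_k (Σ_{P∪{k}}^{-1})_{kk}; in particular, if μ̂_k < 0 then x_k > 0. -/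
open Matrix

/-!
Subtracting the two systems gives `A (w - x) = μ̂ eₖ`, so `w - x` is `μ̂` times the `k`-th column
of `A⁻¹`. Reading off the `k`-th entry and using `w k = 0` yields `x k = -μ̂ (A⁻¹)ₖₖ`, and the
diagonal of the positive definite matrix `A⁻¹` is positive.
-/

theorem Matrix.mulVec_sub_eq_single_of_mulVec_eq_update {n R : Type*} [Fintype n] [DecidableEq n]
    [Ring R] {A : Matrix n n R} {b w x : n → R} {k : n} {c : R}
    (hw : A *ᵥ w = Function.update b k (b k + c)) (hx : A *ᵥ x = b) :
    A *ᵥ (w - x) = Pi.single k c := by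
  ext i
  rw [mulVec_sub, hw, hx, Pi.sub_apply]
  rcases eq_or_ne i k with rfl | hik
  · simp
  · simp [hik]

theorem Matrix.apply_eq_inv_apply_mul_of_mulVec_eq_single {n R : Type*} [Fintype n]
    [DecidableEq n] [CommRing R] {A : Matrix n n R} (hA : IsUnit A) {v : n → R} {k : n}
    {c : R} (h : A *ᵥ v = Pi.single k c) (i : n) :
    v i = A⁻¹ i k * c := by
  have : Invertible A := hA.invertible
  rw [← inv_mulVec_eq_vec h.symm]
  simp

theorem active_set_entering_variable_general (m : ℕ)
    (A : Matrix (Fin (m + 1)) (Fin (m + 1)) ℝ) (hA : A.PosDef)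
    (k : Fin (m + 1))
    (b w x : Fin (m + 1) → ℝ) (μhat : ℝ)
    (hw : A.mulVec w = Function.update b k (b k + μhat))
    (hwk : w k = 0)
    (hx : A.mulVec x = b) :
    x k = -μhat * A⁻¹ k k ∧ (μhat < 0 → 0 < x k) := by
  have hdiff : (w - x) k = A⁻¹ k k * μhat :=
    apply_eq_inv_apply_mul_of_mulVec_eq_single hA.isUnit
      (mulVec_sub_eq_single_of_mulVec_eq_update hw hx) k
  have hxk : x k = -μhat * A⁻¹ k k := by
    rw [Pi.sub_apply, hwk] at hdiff
    linarith
  exact ⟨hxk, fun hμ => hxk ▸ mul_pos (neg_pos.2 hμ) hA.inv.diag_pos⟩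

/-- Key active-set step: if `A w = b + μ̂ e_k` with `w_k = 0` and `A x = b`
(`k` the last index of the symmetric positive definite matrix `A = Σ_{P∪{k}}`),
then `x_k = -μ̂ (A⁻¹)_{kk}`; in particular `μ̂ < 0` implies `x_k > 0`. -/
theorem active_set_entering_variable (m : ℕ)
    (A : Matrix (Fin (m + 1)) (Fin (m + 1)) ℝ) (hA : A.PosDef)
    (k : Fin (m + 1)) (hk : k = Fin.last m)
    (b w x : Fin (m + 1) → ℝ) (μhat : ℝ)
    (hw : A.mulVec w = Function.update b k (b k + μhat))
    (hwk : w k = 0)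
    (hx : A.mulVec x = b) :
    x k = -μhat * A⁻¹ k k ∧ (μhat < 0 → 0 < x k) :=
  active_set_entering_variable_general m A hA k b w x μhat hw hwk hx
end

section
/- For the quadratic reformulation: if w* solves min w^T Σ w subject to w^T e = z and w ≥ 0 (for fixed z > 0), and Σ_i w*_i > 0, then w*/(Σ_i w*_i) maximizes S(w) = w^T e / sqrt(w^T Σ w) over {w ≥ 0 : Σ_i w_i = 1, w^T e > 0}. -/
open Matrix

/-! Both the excess return `w ⬝ᵥ e` and the volatility `√(w ⬝ᵥ Σ *ᵥ w)` are positively homogeneous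
of degree one, so the Sharpe ratio is invariant under positive scaling. Any admissible `w` can
therefore be rescaled to excess return `z`, where the variance-minimizer `w*` has the smallest
volatility and hence the largest Sharpe ratio; normalizing `w*` does not change its ratio. -/

namespace Portfolio

variable {ι : Type*} [Fintype ι]

noncomputable def sharpeRatio (Sig : Matrix ι ι ℝ) (e w : ι → ℝ) : ℝ :=
  (w ⬝ᵥ e) / Real.sqrt (w ⬝ᵥ Sig *ᵥ w)

theorem sharpeRatio_smul (Sig : Matrix ι ι ℝ) (e w : ι → ℝ) {t : ℝ} (ht : 0 < t) :
    sharpeRatio Sig e (t • w) = sharpeRatio Sig e w := by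
  have hvar : t • w ⬝ᵥ Sig *ᵥ (t • w) = t ^ 2 * (w ⬝ᵥ Sig *ᵥ w) := by
    simp only [mulVec_smul, smul_dotProduct, dotProduct_smul, smul_eq_mul]
    ring
  rw [sharpeRatio, sharpeRatio, hvar, Real.sqrt_mul (sq_nonneg t), Real.sqrt_sq ht.le,
    smul_dotProduct, smul_eq_mul, mul_div_mul_left _ _ ht.ne']

theorem sharpeRatio_le_of_dotProduct_eq {Sig : Matrix ι ι ℝ} {e v w : ι → ℝ} {z : ℝ}
    (hz : 0 ≤ z) (hv : v ⬝ᵥ e = z) (hw : w ⬝ᵥ e = z) (hwvar : 0 < w ⬝ᵥ Sig *ᵥ w)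
    (hle : w ⬝ᵥ Sig *ᵥ w ≤ v ⬝ᵥ Sig *ᵥ v) :
    sharpeRatio Sig e v ≤ sharpeRatio Sig e w := by
  rw [sharpeRatio, sharpeRatio, hv, hw]
  exact div_le_div_of_nonneg_left hz (Real.sqrt_pos.mpr hwvar) (Real.sqrt_le_sqrt hle)

theorem sharpeRatio_le_of_isMinVariance {Sig : Matrix ι ι ℝ} (hSig : Sig.PosDef)
    {e wstar : ι → ℝ} {z : ℝ} (hz : 0 < z) (hwstar : wstar ≠ 0) (hret : wstar ⬝ᵥ e = z)
    (hopt : ∀ w : ι → ℝ, (∀ i, 0 ≤ w i) → w ⬝ᵥ e = z →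
      wstar ⬝ᵥ Sig *ᵥ wstar ≤ w ⬝ᵥ Sig *ᵥ w)
    {w : ι → ℝ} (hw : ∀ i, 0 ≤ w i) (hwe : 0 < w ⬝ᵥ e) :
    sharpeRatio Sig e w ≤ sharpeRatio Sig e wstar := by
  set c := z / (w ⬝ᵥ e)
  have hc : 0 < c := div_pos hz hwe
  have hce : c • w ⬝ᵥ e = z := by
    rw [smul_dotProduct, smul_eq_mul, div_mul_cancel₀ _ hwe.ne']
  rw [← sharpeRatio_smul Sig e w hc]
  exact sharpeRatio_le_of_dotProduct_eq hz.le hce hret (hSig.dotProduct_mulVec_pos hwstar)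
    (hopt _ (fun i => mul_nonneg hc.le (hw i)) hce)

end Portfolio

theorem quadratic_reformulation_general (n : ℕ)
    (Sig : Matrix (Fin n) (Fin n) ℝ) (hSig : Sig.PosDef)
    (e : Fin n → ℝ) (z : ℝ) (hz : 0 < z)
    (wstar : Fin n → ℝ)
    (hret : wstar ⬝ᵥ e = z)
    (hopt : ∀ w : Fin n → ℝ, (∀ i, 0 ≤ w i) → w ⬝ᵥ e = z →
      wstar ⬝ᵥ Sig.mulVec wstar ≤ w ⬝ᵥ Sig.mulVec w)
    (hsum : 0 < ∑ i, wstar i) :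
    ∀ w : Fin n → ℝ, (∀ i, 0 ≤ w i) → ∑ i, w i = 1 → 0 < w ⬝ᵥ e →
      (w ⬝ᵥ e) / Real.sqrt (w ⬝ᵥ Sig.mulVec w) ≤
        (((∑ i, wstar i)⁻¹ • wstar) ⬝ᵥ e) /
          Real.sqrt (((∑ i, wstar i)⁻¹ • wstar) ⬝ᵥ
            Sig.mulVec ((∑ i, wstar i)⁻¹ • wstar)) := by
  intro w hw _ hwe
  have hwstar : wstar ≠ 0 := by
    rintro rfl
    simp at hsum
  change Portfolio.sharpeRatio Sig e w ≤ Portfolio.sharpeRatio Sig e _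
  rw [Portfolio.sharpeRatio_smul Sig e wstar (inv_pos.mpr hsum)]
  exact Portfolio.sharpeRatio_le_of_isMinVariance hSig hz hwstar hret hopt hw hwe

/-- Quadratic reformulation: a normalized minimum-variance portfolio with fixed
excess return `z > 0` maximizes the Sharpe ratio over nonnegative weights
summing to one with positive excess return. -/
theorem quadratic_reformulation (n : ℕ)
    (Sig : Matrix (Fin n) (Fin n) ℝ) (hSig : Sig.PosDef)
    (e : Fin n → ℝ) (he : ∃ i, 0 < e i) (z : ℝ) (hz : 0 < z)
    (wstar : Fin n → ℝ)
    (hnonneg : ∀ i, 0 ≤ wstar i) (hret : wstar ⬝ᵥ e = z)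
    (hopt : ∀ w : Fin n → ℝ, (∀ i, 0 ≤ w i) → w ⬝ᵥ e = z →
      wstar ⬝ᵥ Sig.mulVec wstar ≤ w ⬝ᵥ Sig.mulVec w)
    (hsum : 0 < ∑ i, wstar i) :
    ∀ w : Fin n → ℝ, (∀ i, 0 ≤ w i) → ∑ i, w i = 1 → 0 < w ⬝ᵥ e →
      (w ⬝ᵥ e) / Real.sqrt (w ⬝ᵥ Sig.mulVec w) ≤
        (((∑ i, wstar i)⁻¹ • wstar) ⬝ᵥ e) /
          Real.sqrt (((∑ i, wstar i)⁻¹ • wstar) ⬝ᵥ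
            Sig.mulVec ((∑ i, wstar i)⁻¹ • wstar)) :=
  quadratic_reformulation_general n Sig hSig e z hz wstar hret hopt hsum
end
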